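/- Let μ_1, …, μ_k be a sequence of roots of the root pairing (in the paper, simple roots; repetitions allowed), and let λ ∈ M be a weight. For ε ∈ {0,1}^k set v_i(ε) = ∏_{1 ≤ j ≤ i, ε_j = 1} s_{μ_j} ∈ W (product of the reflections taken in increasing order of j, the empty product being the identity), v(ε) = v_k(ε), and α_i(ε) = v_i(ε)·μ_i ∈ M; set R^{λ,ε} = T_{μ_1}^{ε_1} ∘ T_{μ_2}^{ε_2} ∘ ⋯ ∘ T_{μ_k}^{ε_k}(e^λ) ∈ ℤ[M] (so T_{μ_k}^{ε_k} is applied first). Order {0,1}^k by ε ≤ ε′ iff ε_i = 1 implies ε′_i = 1 for all i. Then for every ε ∈ {0,1}^k: e^{v(ε)λ} = ∑_{ε′ ∈ {0,1}^k, ε ≤ ε′} R^{λ,ε′} · ∏_{1 ≤ i ≤ k, ε′_i = 0} (1 − e^{−α_i(ε)}). -/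

import Mathlib

/-- The basis element `e^λ` of the group algebra `ℤ[M]`. -/
noncomputable def expWeight {M : Type*} [AddCommGroup M] (lam : M) :
    AddMonoidAlgebra ℤ M :=
  AddMonoidAlgebra.single lam 1

/-- The value of the Demazure operator `T_β^0` on the basis element `e^λ`,
for the root `β = P.root i`. -/
noncomputable def demazureTerm {ι M N : Type*} [AddCommGroup M] [AddCommGroup N]
    (P : RootPairing ι ℤ M N) (i : ι) (lam : M) : AddMonoidAlgebra ℤ M :=
  if 0 < P.coroot' i lam then
    ∑ j ∈ Finset.range (P.coroot' i lam).toNat, expWeight (lam - (j : ℤ) • P.root i)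
  else if P.coroot' i lam < 0 then
    -∑ j ∈ Finset.Icc 1 (-(P.coroot' i lam)).toNat, expWeight (lam + (j : ℤ) • P.root i)
  else 0

/-- The Demazure operator `T_β^0 : ℤ[M] → ℤ[M]` for the root `β = P.root i`. -/
noncomputable def TZero {ι M N : Type*} [AddCommGroup M] [AddCommGroup N]
    (P : RootPairing ι ℤ M N) (i : ι) :
    AddMonoidAlgebra ℤ M →ₗ[ℤ] AddMonoidAlgebra ℤ M :=
  Finsupp.lift (AddMonoidAlgebra ℤ M) ℤ M (demazureTerm P i) ∘ₗ
    (AddMonoidAlgebra.coeffLinearEquiv ℤ).toLinearMap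

/-- The operator `T_β^1 : ℤ[M] → ℤ[M]`, `e^λ ↦ e^{s_β λ}`, for the root `β = P.root i`. -/
noncomputable def TOne {ι M N : Type*} [AddCommGroup M] [AddCommGroup N]
    (P : RootPairing ι ℤ M N) (i : ι) :
    AddMonoidAlgebra ℤ M →ₗ[ℤ] AddMonoidAlgebra ℤ M :=
  Finsupp.lift (AddMonoidAlgebra ℤ M) ℤ M (fun lam => expWeight (P.reflection i lam)) ∘ₗ
    (AddMonoidAlgebra.coeffLinearEquiv ℤ).toLinearMap

/-- `T_β^ε`: the operator `T_β^1` if `ε = 1` (`true`) and the Demazure operator `T_β^0`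
if `ε = 0` (`false`). -/
noncomputable def Tsel {ι M N : Type*} [AddCommGroup M] [AddCommGroup N]
    (P : RootPairing ι ℤ M N) (i : ι) :
    Bool → (AddMonoidAlgebra ℤ M →ₗ[ℤ] AddMonoidAlgebra ℤ M)
  | true => TOne P i
  | false => TZero P i

/-- The coefficient `R^{λ,ε}_{μ_1,…,μ_k} = T_{μ_1}^{ε_1} ∘ ⋯ ∘ T_{μ_k}^{ε_k} (e^λ)`
(the operator `T_{μ_k}^{ε_k}` is applied first). -/
noncomputable def Rcoef {ι M N : Type*} [AddCommGroup M] [AddCommGroup N]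
    (P : RootPairing ι ℤ M N) {k : ℕ} (μ : Fin k → ι) (ε : Fin k → Bool) (lam : M) :
    AddMonoidAlgebra ℤ M :=
  ((List.finRange k).map fun j => Tsel P (μ j) (ε j)).foldr (fun T x => T x)
    (expWeight lam)

/-- `v_m(ε) = ∏_{1 ≤ j ≤ m, ε_j = 1} s_{μ_j}` (product of reflections taken in increasing
order of `j`, here over the first `m` indices `j` with `ε_j = 1`). -/
noncomputable def weylUpTo {ι M N : Type*} [AddCommGroup M] [AddCommGroup N]
    (P : RootPairing ι ℤ M N) {k : ℕ} (μ : Fin k → ι) (ε : Fin k → Bool) (m : ℕ) :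
    M ≃ₗ[ℤ] M :=
  (((((List.finRange k).take m).filter fun j => ε j).map
    fun j => P.reflection (μ j))).prod

/-!
Induction on `k`, splitting off `μ_1 = β`. Two facts about the operators drive it: `T_β^1` is
the ring automorphism of `ℤ[M]` induced by `s_β`, and `T_β^1 x + T_β^0 x · (1 - e^{-β}) = x`
(on `e^λ` this is a telescoping sum). If `ε_1 = 1`, only `ε'_1 = 1` contributes and both
sides are `T_β^1` applied to the two sides for `(μ_2, …, μ_k)`, since
`v_{i+1}(ε) = s_β v_i(ε_2, …, ε_k)`. If `ε_1 = 0`, then `α_1(ε) = β` and the terms with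
`ε'_1 = 1` and `ε'_1 = 0` combine, by the identity, into the sum for `(μ_2, …, μ_k)`.
-/

open AddMonoidAlgebra Finset

section Combinatorics

variable {k : ℕ}

lemma sum_filter_cons_imp {R : Type*} [AddCommMonoid R] (b : Bool) (ε : Fin k → Bool)
    (F : (Fin (k + 1) → Bool) → R) :
    ∑ ε' ∈ univ.filter (fun ε' : Fin (k + 1) → Bool =>
          ∀ i, (Fin.cons b ε : Fin (k + 1) → Bool) i = true → ε' i = true),
        F ε'
      = ∑ ε' ∈ univ.filter (fun ε' : Fin k → Bool => ∀ i, ε i = true → ε' i = true),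
          ∑ b' ∈ univ.filter (fun b' : Bool => b = true → b' = true),
            F (Fin.cons b' ε') := by
  rw [sum_filter, ← (Fin.consEquiv fun _ => Bool).sum_comp]
  simp only [sum_filter, Fintype.sum_prod_type, Fin.consEquiv, Equiv.coe_fn_mk,
    Fin.forall_fin_succ, Fin.cons_zero, Fin.cons_succ]
  rw [sum_comm]
  refine sum_congr rfl fun ε' _ => ?_
  by_cases hε' : ∀ i, ε i = true → ε' i = true
  · simp [eq_true hε']
  · simp [eq_false hε']

lemma prod_filter_cons_eq_false {R : Type*} [CommMonoid R] (b : Bool) (ε : Fin k → Bool)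
    (f : Fin (k + 1) → R) :
    ∏ i ∈ univ.filter (fun i => (Fin.cons b ε : Fin (k + 1) → Bool) i = false), f i
      = (if b = false then f 0 else 1)
          * ∏ i ∈ univ.filter (fun i => ε i = false), f i.succ := by
  simp only [prod_filter, Fin.prod_univ_succ, Fin.cons_zero, Fin.cons_succ]

end Combinatorics

section Operators

variable {ι M N : Type*} [AddCommGroup M] [AddCommGroup N] (P : RootPairing ι ℤ M N) (i : ι)

lemma expWeight_add (a b : M) : expWeight (a + b) = expWeight a * expWeight b := by
  simp [expWeight, single_mul_single]

lemma expWeight_sub_mul_one_sub (a b : M) :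
    expWeight a * (1 - expWeight (-b)) = expWeight a - expWeight (a - b) := by
  rw [mul_sub, mul_one, ← expWeight_add, ← sub_eq_add_neg]

lemma sum_range_expWeight_mul_one_sub (a b : M) (n : ℕ) :
    (∑ j ∈ range n, expWeight (a - (j : ℤ) • b)) * (1 - expWeight (-b))
      = expWeight a - expWeight (a - (n : ℤ) • b) := by
  induction n with
  | zero => simp
  | succ n ih =>
    rw [sum_range_succ, add_mul, ih, expWeight_sub_mul_one_sub, Nat.cast_succ, add_smul,
      one_smul, ← sub_sub, sub_add_sub_cancel]

lemma sum_Icc_expWeight_mul_one_sub (a b : M) (n : ℕ) :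
    (∑ j ∈ Icc 1 n, expWeight (a + (j : ℤ) • b)) * (1 - expWeight (-b))
      = expWeight (a + (n : ℤ) • b) - expWeight a := by
  induction n with
  | zero => simp
  | succ n ih =>
    rw [sum_Icc_succ_top (by omega), add_mul, ih, expWeight_sub_mul_one_sub, Nat.cast_succ,
      add_smul, one_smul, ← add_assoc, add_sub_cancel_right, add_comm, sub_add_sub_cancel]

lemma single_eq_smul_expWeight (a : M) (b : ℤ) :
    (single a b : AddMonoidAlgebra ℤ M) = b • expWeight a := by
  rw [expWeight, smul_single, smul_eq_mul, mul_one]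

lemma coe_TOne : ⇑(TOne P i) = mapDomainRingHom ℤ (P.reflection i).toAddMonoidHom := by
  ext x : 1
  induction x using AddMonoidAlgebra.induction_linear with
  | zero => simp
  | add f g hf hg => rw [map_add, map_add, hf, hg]
  | single a b => simp [TOne, expWeight]

lemma TOne_expWeight (a : M) : TOne P i (expWeight a) = expWeight (P.reflection i a) := by
  simp [coe_TOne, expWeight]

lemma TZero_expWeight (a : M) : TZero P i (expWeight a) = demazureTerm P i a := by
  simp [TZero, expWeight]

lemma demazureTerm_mul_one_sub (a : M) :
    demazureTerm P i a * (1 - expWeight (-P.root i))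
      = expWeight a - expWeight (P.reflection i a) := by
  rw [RootPairing.reflection_apply, demazureTerm]
  split_ifs with hpos hneg
  · rw [sum_range_expWeight_mul_one_sub, Int.toNat_of_nonneg hpos.le]
  · rw [neg_mul, sum_Icc_expWeight_mul_one_sub, Int.toNat_of_nonneg (by omega), neg_smul,
      ← sub_eq_add_neg, neg_sub]
  · rw [show P.coroot' i a = 0 by omega, zero_smul, sub_zero, sub_self, zero_mul]

lemma TOne_add_TZero_mul_one_sub (x : AddMonoidAlgebra ℤ M) :
    TOne P i x + TZero P i x * (1 - expWeight (-P.root i)) = x := by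
  induction x using AddMonoidAlgebra.induction_linear with
  | zero => simp
  | add f g hf hg => rw [map_add, map_add, add_mul, add_add_add_comm, hf, hg]
  | single a b =>
    rw [single_eq_smul_expWeight, map_smul, map_smul, TOne_expWeight, TZero_expWeight,
      smul_mul_assoc, ← smul_add, demazureTerm_mul_one_sub, add_sub_cancel]

end Operators

section BottSamelson

variable {ι M N : Type*} [AddCommGroup M] [AddCommGroup N] (P : RootPairing ι ℤ M N) {k : ℕ}

lemma Rcoef_cons (m : ι) (μ : Fin k → ι) (b : Bool) (ε : Fin k → Bool) (lam : M) :
    Rcoef P (Fin.cons m μ) (Fin.cons b ε) lam = Tsel P m b (Rcoef P μ ε lam) := by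
  rw [Rcoef, List.finRange_succ, List.map_cons, List.foldr_cons, List.map_map]
  rfl

lemma weylUpTo_zero (μ : Fin k → ι) (ε : Fin k → Bool) : weylUpTo P μ ε 0 = 1 := by
  simp [weylUpTo]

lemma weylUpTo_cons_succ (m : ι) (μ : Fin k → ι) (b : Bool) (ε : Fin k → Bool) (n : ℕ) :
    weylUpTo P (Fin.cons m μ) (Fin.cons b ε) (n + 1)
      = (if b then P.reflection m else 1) * weylUpTo P μ ε n := by
  rw [weylUpTo, weylUpTo, List.finRange_succ, List.take_succ_cons, ← List.map_take,
    List.filter_cons, List.filter_map]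
  cases b <;> simp [Function.comp_def]

/-- The restriction at the fixed point `ε` of `∑_{ε'} R^{λ,ε'} [O_{Γ̄_{ε'}}]`. -/
noncomputable def fixedPointExpansion (μ : Fin k → ι) (lam : M) (ε : Fin k → Bool) :
    AddMonoidAlgebra ℤ M :=
  ∑ ε' ∈ univ.filter (fun ε' : Fin k → Bool => ∀ i, ε i = true → ε' i = true),
    Rcoef P μ ε' lam
      * ∏ i ∈ univ.filter (fun i : Fin k => ε' i = false),
          (1 - expWeight (-(weylUpTo P μ ε (i.val + 1) (P.root (μ i)))))

lemma fixedPointExpansion_cons_false (m : ι) (μ : Fin k → ι) (lam : M) (ε : Fin k → Bool) :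
    fixedPointExpansion P (Fin.cons m μ) lam (Fin.cons false ε)
      = fixedPointExpansion P μ lam ε := by
  rw [fixedPointExpansion, fixedPointExpansion, sum_filter_cons_imp]
  refine sum_congr rfl fun ε' _ => ?_
  simp only [Bool.false_eq_true, false_imp_iff, filter_true, Fintype.sum_bool,
    prod_filter_cons_eq_false, Rcoef_cons, Fin.val_succ, Fin.val_zero, weylUpTo_cons_succ,
    weylUpTo_zero, Bool.true_eq_false, if_false, if_true, one_mul, LinearEquiv.coe_one, id,
    Fin.cons_zero, Fin.cons_succ, Tsel]
  conv_rhs => rw [← TOne_add_TZero_mul_one_sub P m (Rcoef P μ ε' lam)]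
  ring

lemma fixedPointExpansion_cons_true (m : ι) (μ : Fin k → ι) (lam : M) (ε : Fin k → Bool) :
    fixedPointExpansion P (Fin.cons m μ) lam (Fin.cons true ε)
      = TOne P m (fixedPointExpansion P μ lam ε) := by
  rw [fixedPointExpansion, fixedPointExpansion, sum_filter_cons_imp, map_sum]
  refine sum_congr rfl fun ε' _ => ?_
  simp only [true_imp_iff, filter_eq', mem_univ, if_true, sum_singleton,
    prod_filter_cons_eq_false, Rcoef_cons, Fin.val_succ, weylUpTo_cons_succ, Bool.true_eq_false,
    if_false, one_mul, LinearEquiv.mul_apply, Fin.cons_succ, Tsel]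
  rw [coe_TOne, map_mul, map_prod]
  refine congrArg _ (prod_congr rfl fun i _ => ?_)
  rw [map_sub, map_one, ← coe_TOne, TOne_expWeight, map_neg]

end BottSamelson

theorem bott_samelson_line_bundle_restriction_general
    {ι M N : Type*} [AddCommGroup M] [AddCommGroup N] (P : RootPairing ι ℤ M N)
    (k : ℕ) (μ : Fin k → ι) (lam : M) (ε : Fin k → Bool) :
    expWeight (weylUpTo P μ ε k lam)
      = ∑ ε' ∈ Finset.univ.filter
            (fun ε' : Fin k → Bool => ∀ i, ε i = true → ε' i = true),
          Rcoef P μ ε' lam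
            * ∏ i ∈ Finset.univ.filter (fun i : Fin k => ε' i = false),
                (1 - expWeight (-(weylUpTo P μ ε (i.val + 1) (P.root (μ i))))) := by
  change _ = fixedPointExpansion P μ lam ε
  induction k with
  | zero => simp [fixedPointExpansion, weylUpTo_zero, Rcoef]
  | succ k ih =>
    cases μ using Fin.consCases with | cons m μ => ?_
    cases ε using Fin.consCases with | cons b ε => ?_
    rw [weylUpTo_cons_succ]
    cases b
    · rw [fixedPointExpansion_cons_false, ← ih, if_neg Bool.false_ne_true, one_mul]
    · rw [fixedPointExpansion_cons_true, ← ih, if_pos rfl, LinearEquiv.mul_apply, TOne_expWeight]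

/-- the restriction-to-fixed-points form of the decomposition of the line
bundle `L_λ` on the Bott–Samelson variety `Γ(μ_1,…,μ_k)`: at every fixed point `ε`,
`e^{v(ε)λ} = ∑_{ε ≤ ε'} R^{λ,ε'} ∏_{ε'_i = 0} (1 - e^{-α_i(ε)})`,
where `α_i(ε) = v_i(ε)·μ_i`. -/
theorem bott_samelson_line_bundle_restriction
    {ι M N : Type*} [AddCommGroup M] [Module.Free ℤ M] [Module.Finite ℤ M]
    [AddCommGroup N] (P : RootPairing ι ℤ M N)
    (k : ℕ) (μ : Fin k → ι) (lam : M) (ε : Fin k → Bool) :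
    expWeight (weylUpTo P μ ε k lam)
      = ∑ ε' ∈ Finset.univ.filter
            (fun ε' : Fin k → Bool => ∀ i, ε i = true → ε' i = true),
          Rcoef P μ ε' lam
            * ∏ i ∈ Finset.univ.filter (fun i : Fin k => ε' i = false),
                (1 - expWeight (-(weylUpTo P μ ε (i.val + 1) (P.root (μ i))))) :=
  bott_samelson_line_bundle_restriction_general P k μ lam ε
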